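/- arXiv:2002.03329 — 2 statements merged into one kernel-verified Lean document; each statement's English description precedes it below -/
import Mathlib

section
/- Let (r_t) satisfy r_{t+1} ≤ (1 − aγ_t)r_t + cγ_t² with 0 < a ≤ b, c ≥ 0. Fix K > 0, k₀ = ⌈K/2⌉, s = 2b/a, and choose γ_t = 1/b for t < k₀ (or if K ≤ b/a for all t) and γ_t = 2/(a(s + t − k₀)) for t ≥ k₀ when K ≥ b/a. Then r_K ≤ exp(−aK/(2b))·r₀ + 9c/(a²K). -/
/-!
While `γ_t = 1/b` the recursion is a contraction by `1 - a/b` with additive noise `c/b²`, so after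
`k₀ ≥ K/2` steps `r_{k₀} ≤ exp(-aK/(2b)) r₀ + c/(ab)`. In the second phase `γ = 2/(a(s+u))` at
`u = t - k₀`, and multiplying the recursion by `(s+u)(s+u-1)` makes it telescope for the weights
`w_u = (s+u-1)(s+u-2)`: `w_{u+1} r_{k₀+u+1} ≤ w_u r_{k₀+u} + 4c/a²`. Since `w_{K-k₀}` is quadratic
in `K` while the accumulated noise is linear, dividing by it gives the `c/(a²K)` rate.
-/

open Real

theorem le_pow_mul_add_div_one_sub_of_le_mul_add {q d : ℝ} (hq0 : 0 ≤ q) (hq1 : q < 1)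
    (hd : 0 ≤ d) {r : ℕ → ℝ} {n : ℕ} (hrec : ∀ t < n, r (t + 1) ≤ q * r t + d) :
    r n ≤ q ^ n * r 0 + d / (1 - q) := by
  induction n with
  | zero => simpa using div_nonneg hd (sub_nonneg.2 hq1.le)
  | succ n ih =>
    have hr : r n ≤ q ^ n * r 0 + d / (1 - q) := ih fun t ht => hrec t (by omega)
    have hfix : q * (d / (1 - q)) + d = d / (1 - q) := by
      field_simp [(sub_pos.2 hq1).ne']
      ring
    calc r (n + 1) ≤ q * r n + d := hrec n n.lt_succ_self
      _ ≤ q * (q ^ n * r 0 + d / (1 - q)) + d := by gcongr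
      _ = q ^ (n + 1) * r 0 + (q * (d / (1 - q)) + d) := by ring
      _ = q ^ (n + 1) * r 0 + d / (1 - q) := by rw [hfix]

theorem one_sub_pow_le_exp_neg_mul {x : ℝ} (hx : x ≤ 1) (n : ℕ) :
    (1 - x) ^ n ≤ exp (-(n * x)) := by
  rw [neg_mul_eq_mul_neg, exp_nat_mul]
  exact pow_le_pow_left₀ (sub_nonneg.2 hx) (one_sub_le_exp_neg x) n

theorem le_exp_mul_add_of_constant_step {a b c : ℝ} (ha : 0 < a) (hab : a ≤ b) (hc : 0 ≤ c)
    {r γ : ℕ → ℝ} (hr0 : 0 ≤ r 0) {n : ℕ} (hγ : ∀ t < n, γ t = 1 / b)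
    (hrec : ∀ t < n, r (t + 1) ≤ (1 - a * γ t) * r t + c * γ t ^ 2) :
    r n ≤ exp (-(a * n) / b) * r 0 + c / (a * b) := by
  have hb : 0 < b := ha.trans_le hab
  have hab' : a / b ≤ 1 := (div_le_one hb).2 hab
  have hgeom := le_pow_mul_add_div_one_sub_of_le_mul_add (sub_nonneg.2 hab')
    (sub_lt_self 1 (div_pos ha hb)) (by positivity : 0 ≤ c * (1 / b) ^ 2)
    (r := r) (n := n) fun t ht => by
      simpa only [hγ t ht, mul_one_div] using hrec t ht
  have hnoise : c * (1 / b) ^ 2 / (1 - (1 - a / b)) = c / (a * b) := by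
    rw [sub_sub_cancel]
    field_simp
  have hdecay : (1 - a / b) ^ n * r 0 ≤ exp (-(a * n) / b) * r 0 := by
    gcongr
    calc (1 - a / b) ^ n ≤ exp (-(n * (a / b))) := one_sub_pow_le_exp_neg_mul hab' n
      _ = exp (-(a * n) / b) := by ring_nf
  linarith

theorem mul_le_of_decreasing_step {a c P x y : ℝ} (ha : 0 < a) (hc : 0 ≤ c) (hP : 1 ≤ P)
    (h : y ≤ (1 - a * (2 / (a * P))) * x + c * (2 / (a * P)) ^ 2) :
    P * (P - 1) * y ≤ (P - 1) * (P - 2) * x + 4 * c / a ^ 2 := by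
  have hP0 : 0 < P := by linarith
  have hnoise : 4 * c * (P - 1) / (a ^ 2 * P) ≤ 4 * c / a ^ 2 := by
    rw [div_le_div_iff₀ (by positivity) (by positivity)]
    nlinarith [mul_nonneg hc (sq_nonneg a)]
  calc P * (P - 1) * y
      ≤ P * (P - 1) * ((1 - a * (2 / (a * P))) * x + c * (2 / (a * P)) ^ 2) := by
        gcongr
    _ = (P - 1) * (P - 2) * x + 4 * c * (P - 1) / (a ^ 2 * P) := by
        field_simp; ring
    _ ≤ (P - 1) * (P - 2) * x + 4 * c / a ^ 2 := by gcongr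

theorem weighted_le_of_decreasing_steps {a c s : ℝ} (ha : 0 < a) (hc : 0 ≤ c) (hs : 1 ≤ s)
    {ρ : ℕ → ℝ} {n : ℕ}
    (hrec : ∀ u < n, ρ (u + 1) ≤
      (1 - a * (2 / (a * (s + u)))) * ρ u + c * (2 / (a * (s + u))) ^ 2) :
    (s + n - 1) * (s + n - 2) * ρ n ≤ (s - 1) * (s - 2) * ρ 0 + 4 * c / a ^ 2 * n := by
  induction n with
  | zero => simp
  | succ n ih =>
    have hstep := mul_le_of_decreasing_step ha hc (by linarith [n.cast_nonneg (α := ℝ)])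
      (hrec n n.lt_succ_self)
    have ih := ih fun u hu => hrec u (by omega)
    push_cast
    calc (s + (n + 1) - 1) * (s + (n + 1) - 2) * ρ (n + 1)
        = (s + n) * (s + n - 1) * ρ (n + 1) := by ring
      _ ≤ (s + n - 1) * (s + n - 2) * ρ n + 4 * c / a ^ 2 := hstep
      _ ≤ (s - 1) * (s - 2) * ρ 0 + 4 * c / a ^ 2 * (n + 1) := by linarith

theorem exp_neg_mul_div_le_of_le_two_mul {a b x n : ℝ} (ha : 0 ≤ a) (hb : 0 < b)
    (hn : x ≤ 2 * n) : exp (-(a * n) / b) ≤ exp (-(a * x) / (2 * b)) := by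
  rw [exp_le_exp, neg_div, neg_div, neg_le_neg_iff, div_le_div_iff₀ (by positivity) hb]
  nlinarith [mul_le_mul_of_nonneg_left hn (mul_nonneg ha hb.le)]

theorem le_of_two_phase_bounds {a b c s U K e x y : ℝ} (ha : 0 < a) (hc : 0 ≤ c)
    (hs : s = 2 * b / a) (hs2 : 2 ≤ s) (hU : 1 ≤ U) (hK : 0 < K) (hKU : K ≤ 2 * U + 1)
    (he : 0 ≤ e) (hy : y ≤ e + c / (a * b))
    (hx : (s + U - 1) * (s + U - 2) * x ≤ (s - 1) * (s - 2) * y + 4 * c / a ^ 2 * U) :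
    x ≤ e + 9 * c / (a ^ 2 * K) := by
  set W := (s + U - 1) * (s + U - 2)
  have hW : 0 < W := mul_pos (by linarith) (by linarith)
  have hw0 : 0 ≤ (s - 1) * (s - 2) := by nlinarith
  have hwW : (s - 1) * (s - 2) ≤ W := by nlinarith
  have hcoef : 2 * (s - 1) * (s - 2) / s + 4 * U ≤ 9 * W / K := by
    have h1 : 2 * (s - 1) * (s - 2) / s ≤ 2 * (s - 2) := by
      rw [div_le_iff₀ (by linarith)]
      nlinarith
    have h2 : (2 * (s - 2) + 4 * U) * K ≤ 9 * W := by
      calc (2 * (s - 2) + 4 * U) * K ≤ (2 * (s - 2) + 4 * U) * (2 * U + 1) := by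
            gcongr
        _ ≤ 9 * W := by
            nlinarith [mul_nonneg (by linarith : (0 : ℝ) ≤ s - 2) (by linarith : 0 ≤ U)]
    rw [le_div_iff₀ hK]
    nlinarith
  have hnoise :
      (s - 1) * (s - 2) * (c / (a * b)) + 4 * c / a ^ 2 * U ≤ W * (9 * c / (a ^ 2 * K)) := by
    have hb : b = a * s / 2 := by rw [hs]; field_simp
    calc (s - 1) * (s - 2) * (c / (a * b)) + 4 * c / a ^ 2 * U
        = c / a ^ 2 * (2 * (s - 1) * (s - 2) / s + 4 * U) := by
          rw [hb]; field_simp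
      _ ≤ c / a ^ 2 * (9 * W / K) := by gcongr
      _ = W * (9 * c / (a ^ 2 * K)) := by field_simp
  refine le_of_mul_le_mul_left ?_ hW
  calc W * x ≤ (s - 1) * (s - 2) * (e + c / (a * b)) + 4 * c / a ^ 2 * U := by
        nlinarith [mul_le_mul_of_nonneg_left hy hw0]
    _ ≤ W * e + W * (9 * c / (a ^ 2 * K)) := by nlinarith [mul_le_mul_of_nonneg_right hwW he]
    _ = W * (e + 9 * c / (a ^ 2 * K)) := by ring

theorem stmt14_general (a b c : ℝ) (ha : 0 < a) (hab : a ≤ b) (hc : 0 ≤ c)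
    (K : ℕ) (hK : 0 < K) (r : ℕ → ℝ) (hr : ∀ t, 0 ≤ r t)
    (k0 : ℕ) (hk0 : k0 = (K + 1) / 2) (s : ℝ) (hs : s = 2 * b / a)
    (γ : ℕ → ℝ)
    (hγ : ∀ t, γ t = if (K : ℝ) ≤ b / a ∨ t < k0 then 1 / b
      else 2 / (a * (s + (t : ℝ) - (k0 : ℝ))))
    (hrec : ∀ t, r (t + 1) ≤ (1 - a * γ t) * r t + c * (γ t) ^ 2) :
    r K ≤ Real.exp (-(a * K) / (2 * b)) * r 0 + 9 * c / (a ^ 2 * K) := by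
  have hb : 0 < b := ha.trans_le hab
  have hKpos : (0 : ℝ) < K := by exact_mod_cast hK
  have hphase1 : ∀ n : ℕ, (K : ℝ) ≤ 2 * n → (∀ t < n, γ t = 1 / b) →
      r n ≤ exp (-(a * K) / (2 * b)) * r 0 + c / (a * b) := by
    intro n hn hγn
    have hr0 := hr 0
    grw [← exp_neg_mul_div_le_of_le_two_mul ha.le hb hn]
    exact le_exp_mul_add_of_constant_step ha hab hc hr0 hγn fun t _ => hrec t
  by_cases hsmall : (K : ℝ) ≤ b / a
  · have hnoise : c / (a * b) ≤ 9 * c / (a ^ 2 * K) := by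
      rw [le_div_iff₀ ha] at hsmall
      calc c / (a * b) ≤ c / (a ^ 2 * K) :=
            div_le_div_of_nonneg_left hc (by positivity) (by nlinarith)
        _ ≤ 9 * c / (a ^ 2 * K) := by gcongr; linarith
    linarith [hphase1 K (by linarith) fun t _ => by simp [hγ, hsmall]]
  · rw [not_le] at hsmall
    have hK2 : 2 ≤ K := by exact_mod_cast ((one_le_div ha).2 hab).trans_lt hsmall
    have hs2 : 2 ≤ s := by rw [hs, le_div_iff₀ ha]; linarith
    obtain ⟨U, hU⟩ : ∃ U, K = k0 + U := ⟨K - k0, by omega⟩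
    have hphase2 := weighted_le_of_decreasing_steps ha hc (s := s) (ρ := fun u => r (k0 + u))
      (n := U) (by linarith) fun u _ => by
        have h := hrec (k0 + u)
        have hshift : s + ((k0 + u : ℕ) : ℝ) - k0 = s + u := by push_cast; ring
        rwa [hγ, if_neg (not_or.2 ⟨hsmall.not_ge, by omega⟩), hshift] at h
    refine le_of_two_phase_bounds ha hc hs hs2
      (U := U) (by exact_mod_cast (by omega : 1 ≤ U)) hKpos
      (by exact_mod_cast (by omega : K ≤ 2 * U + 1)) (mul_nonneg (exp_pos _).le (hr 0))
      (hphase1 k0 (by exact_mod_cast (by omega : K ≤ 2 * k0)) fun t ht => by simp [hγ, ht]) ?_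
    simpa only [hU, add_zero] using hphase2

theorem stmt14 (a b c : ℝ) (ha : 0 < a) (hab : a ≤ b) (hc : 0 ≤ c)
    (K : ℕ) (hK : 0 < K) (r : ℕ → ℝ) (hr : ∀ t, 0 ≤ r t)
    (k0 : ℕ) (hk0 : k0 = (K + 1) / 2) (s : ℝ) (hs : s = 2 * b / a)
    (γ : ℕ → ℝ)
    (hγ : ∀ t, γ t = if (K : ℝ) ≤ b / a ∨ t < k0 then 1 / b
      else 2 / (a * (s + (t : ℝ) - (k0 : ℝ))))
    (hγb : ∀ t, γ t ≤ 1 / b)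
    (hrec : ∀ t, r (t + 1) ≤ (1 - a * γ t) * r t + c * (γ t) ^ 2) :
    r K ≤ Real.exp (-(a * K) / (2 * b)) * r 0 + 9 * c / (a ^ 2 * K) :=
  stmt14_general a b c ha hab hc K hK r hr k0 hk0 s hs γ hγ hrec
end

section
/- Suppose f is L-smooth, satisfies the PL condition ½‖∇f(x)‖² ≥ μ(f(x) − f★) with minimum f★, and g is unbiased with E‖g(x)‖² ≤ 2A(f(x) − f★) + B‖∇f(x)‖² + C. Then one SGD step with stepsize γ_k ≤ min{μ/(2AL), 1/(2BL)} satisfies E[f(x_{k+1})] − f★ ≤ (1 − γ_kμ)(E[f(x_k)] − f★) + Lγ_k²C/2. -/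
/-!
Along the segment from `x` to `y`, the function `t ↦ f (x + t (y - x)) - t ⟪∇f x, y - x⟫ -
L t² ‖y - x‖² / 2` has nonpositive derivative by the Lipschitz bound on `∇f`, which gives the
descent inequality `f y ≤ f x + ⟪∇f x, y - x⟫ + L ‖y - x‖² / 2`. Applied to the step
`y = x - γ g` and integrated, unbiasedness turns the linear term into `-γ ‖∇f x‖²`, and the second
moment bound controls the quadratic one. The stepsize restrictions make the resulting `A`- and
`B`-terms at most `γμ (f x - f★) / 2` and `γ ‖∇f x‖² / 4`, and the PL inequality bounds what is
left, `-3γ ‖∇f x‖² / 4 + γμ (f x - f★) / 2`, by `-γμ (f x - f★)`.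
-/

open MeasureTheory
open scoped RealInnerProductSpace

section Descent

variable {E : Type*} [NormedAddCommGroup E] [InnerProductSpace ℝ E] [CompleteSpace E]
  {f : E → ℝ} {L : ℝ}

theorem Differentiable.hasDerivAt_comp_add_smul (hf : Differentiable ℝ f) (x v : E) (t : ℝ) :
    HasDerivAt (fun s : ℝ => f (x + s • v)) ⟪gradient f (x + t • v), v⟫ t := by
  have hline : HasDerivAt (fun s : ℝ => x + s • v) v t := by
    simpa using ((hasDerivAt_id t).smul_const v).const_add x
  rw [inner_gradient_left]
  exact (hf _).hasFDerivAt.comp_hasDerivAt t hline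

theorem Differentiable.le_add_inner_gradient_add_sq (hf : Differentiable ℝ f)
    (hlip : ∀ x y, ‖gradient f x - gradient f y‖ ≤ L * ‖x - y‖) (x y : E) :
    f y ≤ f x + ⟪gradient f x, y - x⟫ + L / 2 * ‖y - x‖ ^ 2 := by
  set v := y - x
  let ψ : ℝ → ℝ := fun t => f (x + t • v) - t * ⟪gradient f x, v⟫ - L / 2 * t ^ 2 * ‖v‖ ^ 2
  let ψ' : ℝ → ℝ := fun t => ⟪gradient f (x + t • v) - gradient f x, v⟫ - L * t * ‖v‖ ^ 2
  have hψ : ∀ t, HasDerivAt ψ (ψ' t) t := fun t =>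
    (((hf.hasDerivAt_comp_add_smul x v t).sub ((hasDerivAt_id t).mul_const _)).sub
      (((hasDerivAt_pow 2 t).const_mul (L / 2)).mul_const _)).congr_deriv
      (by simp only [ψ', inner_sub_left]; ring)
  have hψ'_nonpos : ∀ t ∈ interior (Set.Ici (0 : ℝ)), ψ' t ≤ 0 := by
    intro t ht
    rw [interior_Ici, Set.mem_Ioi] at ht
    have hgrad : ‖gradient f (x + t • v) - gradient f x‖ ≤ L * t * ‖v‖ := by
      simpa [norm_smul, abs_of_pos ht, mul_assoc] using hlip (x + t • v) x
    calc ψ' t ≤ ‖gradient f (x + t • v) - gradient f x‖ * ‖v‖ - L * t * ‖v‖ ^ 2 :=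
          sub_le_sub_right (real_inner_le_norm _ _) _
      _ ≤ L * t * ‖v‖ * ‖v‖ - L * t * ‖v‖ ^ 2 := by gcongr
      _ = 0 := by ring
  have hanti : AntitoneOn ψ (Set.Ici 0) :=
    antitoneOn_of_hasDerivWithinAt_nonpos (convex_Ici 0)
      (fun t _ => (hψ t).continuousAt.continuousWithinAt) (fun t _ => (hψ t).hasDerivWithinAt)
      hψ'_nonpos
  have hψ_one_le_zero : ψ 1 ≤ ψ 0 := hanti Set.self_mem_Ici (Set.mem_Ici.2 zero_le_one) zero_le_one
  simp only [ψ, v, one_smul, add_sub_cancel, zero_smul, add_zero] at hψ_one_le_zero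
  linarith

theorem Differentiable.comp_sub_smul_le (hf : Differentiable ℝ f)
    (hlip : ∀ x y, ‖gradient f x - gradient f y‖ ≤ L * ‖x - y‖) (x v : E) (γ : ℝ) :
    f (x - γ • v) ≤ f x - γ * ⟪gradient f x, v⟫ + L * γ ^ 2 / 2 * ‖v‖ ^ 2 := by
  have h := hf.le_add_inner_gradient_add_sq hlip x (x - γ • v)
  rw [sub_sub_cancel_left, inner_neg_right, real_inner_smul_right, norm_neg, norm_smul,
    mul_pow, Real.norm_eq_abs, sq_abs] at h
  linarith

end Descent

section StochasticStep

variable {Ω E : Type*} [MeasurableSpace Ω] {P : Measure Ω} [IsProbabilityMeasure P]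
  [NormedAddCommGroup E] [InnerProductSpace ℝ E] [CompleteSpace E]
  {f : E → ℝ} {L m : ℝ} {g : Ω → E}

theorem integral_comp_sub_smul_le (hf : Differentiable ℝ f)
    (hlip : ∀ x y, ‖gradient f x - gradient f y‖ ≤ L * ‖x - y‖) (hm : ∀ y, m ≤ f y)
    (hg : MemLp g 2 P) (x : E) (γ : ℝ) :
    ∫ ω, f (x - γ • g ω) ∂P
      ≤ f x - γ * ⟪gradient f x, ∫ ω, g ω ∂P⟫ + L * γ ^ 2 / 2 * ∫ ω, ‖g ω‖ ^ 2 ∂P := by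
  have hg1 : Integrable g P := hg.integrable one_le_two
  have hg2 : Integrable (fun ω => ‖g ω‖ ^ 2) P := hg.integrable_norm_pow two_ne_zero
  have hinner : Integrable (fun ω => γ * ⟪gradient f x, g ω⟫) P :=
    (hg1.const_inner _).const_mul γ
  have hlin : Integrable (fun ω => f x - γ * ⟪gradient f x, g ω⟫) P :=
    (integrable_const _).sub hinner
  have hbound : Integrable
      (fun ω => f x - γ * ⟪gradient f x, g ω⟫ + L * γ ^ 2 / 2 * ‖g ω‖ ^ 2) P :=
    hlin.add (hg2.const_mul _)
  have hstep : Integrable (fun ω => f (x - γ • g ω)) P :=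
    integrable_of_le_of_le
      (hf.continuous.comp_aestronglyMeasurable (aestronglyMeasurable_const.sub (hg.aestronglyMeasurable.const_smul γ)))
      (ae_of_all _ fun ω => hm _)
      (ae_of_all _ fun ω => hf.comp_sub_smul_le hlip x (g ω) γ)
      (integrable_const m) hbound
  calc ∫ ω, f (x - γ • g ω) ∂P
      ≤ ∫ ω, f x - γ * ⟪gradient f x, g ω⟫ + L * γ ^ 2 / 2 * ‖g ω‖ ^ 2 ∂P :=
        integral_mono hstep hbound fun ω => hf.comp_sub_smul_le hlip x (g ω) γ
    _ = f x - γ * ⟪gradient f x, ∫ ω, g ω ∂P⟫ + L * γ ^ 2 / 2 * ∫ ω, ‖g ω‖ ^ 2 ∂P := by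
      rw [integral_add hlin (hg2.const_mul _),
        integral_sub (integrable_const _) hinner, integral_const_mul, integral_const_mul,
        integral_inner hg1, integral_const, probReal_univ, one_smul]

end StochasticStep

theorem mul_le_of_le_div_of_pos {γ a b : ℝ} (hγ : 0 < γ) (ha : 0 < a) (h : γ ≤ a / b) :
    γ * b ≤ a :=
  (le_div_iff₀ ((div_pos_iff_of_pos_left ha).1 (hγ.trans_le h))).1 h

theorem le_one_sub_mul_add_of_descent {Δ Δ' N S γ μ L A B C : ℝ} (hγ : 0 ≤ γ) (hL : 0 ≤ L)
    (hΔ : 0 ≤ Δ) (hN : 0 ≤ N) (hPL : μ * Δ ≤ 1 / 2 * N) (hγA : γ * (2 * A * L) ≤ μ)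
    (hγB : γ * (2 * B * L) ≤ 1) (hS : S ≤ 2 * A * Δ + B * N + C)
    (hstep : Δ' ≤ Δ - γ * N + L * γ ^ 2 / 2 * S) :
    Δ' ≤ (1 - γ * μ) * Δ + L * γ ^ 2 * C / 2 := by
  have hnoise : L * γ ^ 2 / 2 * S ≤ L * γ ^ 2 / 2 * (2 * A * Δ + B * N + C) := by gcongr
  linarith [mul_le_mul_of_nonneg_right hγA (mul_nonneg hγ hΔ),
    mul_le_mul_of_nonneg_right hγB (mul_nonneg hγ hN), mul_le_mul_of_nonneg_left hPL hγ]

theorem stmt15_general {d : ℕ} {Ω : Type*} [MeasureSpace Ω]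
    [IsProbabilityMeasure (volume : Measure Ω)]
    (f : EuclideanSpace ℝ (Fin d) → ℝ) (L μ fstar A B C : ℝ)
    (hL : 0 < L) (hμ : 0 < μ)
    (hdiff : Differentiable ℝ f)
    (hlip : ∀ x y, ‖gradient f x - gradient f y‖ ≤ L * ‖x - y‖)
    (hmin : ∀ x, fstar ≤ f x)
    (hPL : ∀ x, μ * (f x - fstar) ≤ (1 / 2) * ‖gradient f x‖ ^ 2)
    (γ : ℝ) (hγ0 : 0 < γ)
    (hγ : γ ≤ min (μ / (2 * A * L)) (1 / (2 * B * L)))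
    (xk : EuclideanSpace ℝ (Fin d)) (g : Ω → EuclideanSpace ℝ (Fin d))
    (hg2 : MemLp g 2 volume)
    (hunb : (∫ ω, g ω) = gradient f xk)
    (hES : (∫ ω, ‖g ω‖ ^ 2) ≤ 2 * A * (f xk - fstar) + B * ‖gradient f xk‖ ^ 2 + C) :
    (∫ ω, f (xk - γ • g ω)) - fstar
      ≤ (1 - γ * μ) * (f xk - fstar) + L * γ ^ 2 * C / 2 := by
  have hγA := mul_le_of_le_div_of_pos hγ0 hμ (hγ.trans (min_le_left _ _))
  have hγB := mul_le_of_le_div_of_pos hγ0 one_pos (hγ.trans (min_le_right _ _))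
  have hstep := integral_comp_sub_smul_le hdiff hlip hmin hg2 xk γ
  rw [hunb, real_inner_self_eq_norm_sq] at hstep
  exact le_one_sub_mul_add_of_descent hγ0.le hL.le (sub_nonneg.2 (hmin xk)) (sq_nonneg _)
    (hPL xk) hγA hγB hES (by linarith)

theorem stmt15 {d : ℕ} {Ω : Type*} [MeasureSpace Ω]
    [IsProbabilityMeasure (volume : Measure Ω)]
    (f : EuclideanSpace ℝ (Fin d) → ℝ) (L μ fstar A B C : ℝ)
    (hL : 0 < L) (hμ : 0 < μ) (hA : 0 ≤ A) (hB : 0 ≤ B) (hC : 0 ≤ C)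
    (hdiff : Differentiable ℝ f)
    (hlip : ∀ x y, ‖gradient f x - gradient f y‖ ≤ L * ‖x - y‖)
    (hmin : ∀ x, fstar ≤ f x) (hatt : ∃ xstar, f xstar = fstar)
    (hPL : ∀ x, μ * (f x - fstar) ≤ (1 / 2) * ‖gradient f x‖ ^ 2)
    (γ : ℝ) (hγ0 : 0 < γ)
    (hγ : γ ≤ min (μ / (2 * A * L)) (1 / (2 * B * L)))
    (xk : EuclideanSpace ℝ (Fin d)) (g : Ω → EuclideanSpace ℝ (Fin d))
    (hg2 : MemLp g 2 volume)
    (hunb : (∫ ω, g ω) = gradient f xk)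
    (hES : (∫ ω, ‖g ω‖ ^ 2) ≤ 2 * A * (f xk - fstar) + B * ‖gradient f xk‖ ^ 2 + C) :
    (∫ ω, f (xk - γ • g ω)) - fstar
      ≤ (1 - γ * μ) * (f xk - fstar) + L * γ ^ 2 * C / 2 :=
  stmt15_general f L μ fstar A B C hL hμ hdiff hlip hmin hPL γ hγ0 hγ xk g hg2 hunb hES
end
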